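/- (Negativity of det H beyond the epidemic threshold.) Let β, γ, μ > 0 and I ≥ 0 be real numbers, and for S ∈ ℝ let H(S) = !![-(β*I + μ), β*(I - S)/2; β*(I - S)/2, β*S - γ - μ] (the symmetric part of the SIR Jacobian at state (S, I)). Then: (i) the function S ↦ det H(S) has derivative −β·μ − β²·(S + I)/2, which is strictly negative for S, I ≥ 0, so det H is strictly decreasing in S on [0, ∞); (ii) at S = (γ+μ)/β (i.e. S = 1/R₀ where R₀ = β/(γ+μ)), det H = −((γ+μ)²/4)·(1 − I·R₀)² ≤ 0; and consequently (iii) det H(S) ≤ 0 for every S ≥ (γ+μ)/β, so the larger eigenvalue of H is nonnegative there and transient growth of fluctuations is possible. -/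

import Mathlib

/-!
`det H(S)` is a concave quadratic in `S` whose derivative `-βμ - β²(S + I)/2` is negative on
`S ≥ 0`. At `S = 1/R₀ = (γ + μ)/β` it is minus a square, hence `det H(S) ≤ 0` for all larger `S`.
Since `H` is symmetric, `det H` is the product of its two real eigenvalues, so one of them is
nonnegative.
-/

open Matrix

/-- The symmetric part of the SIR Jacobian at state `(S, I)`. -/
noncomputable def Hsir (β γ μ I S : ℝ) : Matrix (Fin 2) (Fin 2) ℝ :=
  !![-(β * I + μ), β * (I - S) / 2; β * (I - S) / 2, β * S - γ - μ]

theorem Matrix.IsHermitian.exists_nonneg_eigenvalue_of_det_nonpos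
    {A : Matrix (Fin 2) (Fin 2) ℝ} (hA : A.IsHermitian) (hdet : A.det ≤ 0) :
    ∃ lam : ℝ, 0 ≤ lam ∧ ∃ v : Fin 2 → ℝ, v ≠ 0 ∧ A *ᵥ v = lam • v := by
  simp only [hA.det_eq_prod_eigenvalues, Fin.prod_univ_two, RCLike.ofReal_real_eq_id,
    id_eq] at hdet
  have hnonneg : ∃ i, 0 ≤ hA.eigenvalues i := by
    by_contra! h
    nlinarith [h 0, h 1, hdet]
  obtain ⟨i, hi⟩ := hnonneg
  refine ⟨hA.eigenvalues i, hi, hA.eigenvectorBasis i, ?_, hA.mulVec_eigenvectorBasis i⟩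
  simpa using hA.eigenvectorBasis.orthonormal.ne_zero i

section SIR

variable (β γ μ I : ℝ)

theorem Hsir_isHermitian (S : ℝ) : (Hsir β γ μ I S).IsHermitian := by
  ext i j
  fin_cases i <;> fin_cases j <;> simp [Hsir]

theorem det_Hsir (S : ℝ) :
    (Hsir β γ μ I S).det =
      -(β * I + μ) * (β * S - γ - μ) - β * (I - S) / 2 * (β * (I - S) / 2) := by
  rw [Hsir, det_fin_two_of]

theorem hasDerivAt_det_Hsir (S : ℝ) :
    HasDerivAt (fun S => (Hsir β γ μ I S).det) (-(β * μ) - β ^ 2 * (S + I) / 2) S := by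
  have hdiag : HasDerivAt (fun S => β * S - γ - μ) β S := by
    simpa using (((hasDerivAt_id S).const_mul β).sub_const γ).sub_const μ
  have hoff : HasDerivAt (fun S => β * (I - S) / 2) (-β / 2) S := by
    simpa using (((hasDerivAt_id S).const_sub I).const_mul β).div_const 2
  simp only [det_Hsir]
  exact ((hdiag.const_mul _).sub (hoff.mul hoff)).congr_deriv (by ring)

variable {β μ I} in
theorem deriv_det_Hsir_neg (hβ : 0 < β) (hμ : 0 < μ) (hI : 0 ≤ I) {S : ℝ} (hS : 0 ≤ S) :
    -(β * μ) - β ^ 2 * (S + I) / 2 < 0 := by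
  have hβμ : 0 < β * μ := mul_pos hβ hμ
  have hquad : 0 ≤ β ^ 2 * (S + I) / 2 := by positivity
  linarith

variable {β μ I} in
theorem strictAntiOn_det_Hsir (hβ : 0 < β) (hμ : 0 < μ) (hI : 0 ≤ I) :
    StrictAntiOn (fun S => (Hsir β γ μ I S).det) (Set.Ici 0) := by
  refine strictAntiOn_of_hasDerivWithinAt_neg (convex_Ici 0)
    (fun S _ => (hasDerivAt_det_Hsir β γ μ I S).continuousAt.continuousWithinAt)
    (fun S _ => (hasDerivAt_det_Hsir β γ μ I S).hasDerivWithinAt) fun S hS => ?_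
  rw [interior_Ici] at hS
  exact deriv_det_Hsir_neg hβ hμ hI (le_of_lt hS)

variable {β γ μ} in
theorem det_Hsir_inv_R₀ (hβ : β ≠ 0) (hγμ : γ + μ ≠ 0) :
    (Hsir β γ μ I ((γ + μ) / β)).det = -((γ + μ) ^ 2 / 4) * (1 - I * (β / (γ + μ))) ^ 2 := by
  rw [det_Hsir]
  field_simp
  ring

end SIR

theorem stmt_19 (β γ μ I : ℝ) (hβ : 0 < β) (hγ : 0 < γ) (hμ : 0 < μ) (hI : 0 ≤ I) :
    (∀ S : ℝ, HasDerivAt (fun S : ℝ => (Hsir β γ μ I S).det)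
        (-(β * μ) - β ^ 2 * (S + I) / 2) S) ∧
      (∀ S : ℝ, 0 ≤ S → -(β * μ) - β ^ 2 * (S + I) / 2 < 0) ∧
      StrictAntiOn (fun S : ℝ => (Hsir β γ μ I S).det) (Set.Ici 0) ∧
      (Hsir β γ μ I ((γ + μ) / β)).det =
        -((γ + μ) ^ 2 / 4) * (1 - I * (β / (γ + μ))) ^ 2 ∧
      (Hsir β γ μ I ((γ + μ) / β)).det ≤ 0 ∧
      (∀ S : ℝ, (γ + μ) / β ≤ S →
        (Hsir β γ μ I S).det ≤ 0 ∧
          ∃ lam : ℝ, 0 ≤ lam ∧ ∃ v : Fin 2 → ℝ, v ≠ 0 ∧ Hsir β γ μ I S *ᵥ v = lam • v) := by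
  have hγμ : 0 < γ + μ := add_pos hγ hμ
  have hthreshold : 0 ≤ (γ + μ) / β := (div_pos hγμ hβ).le
  have hanti := strictAntiOn_det_Hsir γ hβ hμ hI
  have hdet_threshold := det_Hsir_inv_R₀ I hβ.ne' hγμ.ne'
  have hdet_threshold_nonpos : (Hsir β γ μ I ((γ + μ) / β)).det ≤ 0 := by
    rw [hdet_threshold]
    exact mul_nonpos_of_nonpos_of_nonneg (neg_nonpos.mpr (by positivity)) (sq_nonneg _)
  refine ⟨hasDerivAt_det_Hsir β γ μ I, fun S => deriv_det_Hsir_neg hβ hμ hI, hanti,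
    hdet_threshold, hdet_threshold_nonpos, fun S hS => ?_⟩
  have hdet : (Hsir β γ μ I S).det ≤ 0 :=
    (hanti.antitoneOn hthreshold (hthreshold.trans hS) hS).trans hdet_threshold_nonpos
  exact ⟨hdet, (Hsir_isHermitian β γ μ I S).exists_nonneg_eigenvalue_of_det_nonpos hdet⟩
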